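/- Negativity lemma: second-order intuitionistic tense logic IKt2 proves ¬¬□A → □¬¬A and ¬¬■A → ■¬¬A, where ¬A := A → ∀X X. -/
import Mathlib


namespace SOTense

/-- Formulas of second-order tense logic: propositional symbols, de Bruijn
second-order variables, implication, □, ■, and second-order ∀. -/
inductive Fm : Type where
  | pr : ℕ → Fm
  | var : ℕ → Fm
  | imp : Fm → Fm → Fm
  | box : Fm → Fm
  | bbox : Fm → Fm
  | all : Fm → Fm

namespace Fm

/-- Shift de Bruijn variables ≥ c by one. -/
def lift (c : ℕ) : Fm → Fm
  | pr p => pr p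
  | var n => if n < c then var n else var (n + 1)
  | imp A B => imp (A.lift c) (B.lift c)
  | box A => box (A.lift c)
  | bbox A => bbox (A.lift c)
  | all A => all (A.lift (c + 1))

/-- Substitute C for de Bruijn variable k. -/
def subst : Fm → ℕ → Fm → Fm
  | pr p, _, _ => pr p
  | var n, k, C => if n < k then var n else if n = k then C else var (n - 1)
  | imp A B, k, C => imp (A.subst k C) (B.subst k C)
  | box A, k, C => box (A.subst k C)
  | bbox A, k, C => bbox (A.subst k C)
  | all A, k, C => all (A.subst (k + 1) (C.lift 0))

/-- A[C/X]: instantiate the outermost bound variable of the body A with C. -/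
def inst (A C : Fm) : Fm := A.subst 0 C

/-- The propositional symbol P occurs in the formula. -/
def occursPr (P : ℕ) : Fm → Prop
  | pr p => p = P
  | var _ => False
  | imp A B => A.occursPr P ∨ B.occursPr P
  | box A => A.occursPr P
  | bbox A => A.occursPr P
  | all A => A.occursPr P

/-- ⊥ := ∀X X -/
def bot : Fm := all (var 0)
/-- ¬A := A → ⊥ -/
def neg (A : Fm) : Fm := imp A bot
/-- A ∧ B := ∀X((A → B → X) → X) -/
def conj (A B : Fm) : Fm :=
  all (imp (imp (A.lift 0) (imp (B.lift 0) (var 0))) (var 0))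
/-- A ∨ B := ∀X((A → X) → (B → X) → X) -/
def disj (A B : Fm) : Fm :=
  all (imp (imp (A.lift 0) (var 0)) (imp (imp (B.lift 0) (var 0)) (var 0)))
/-- A ↔ B := (A → B) ∧ (B → A) -/
def iff (A B : Fm) : Fm := conj (imp A B) (imp B A)
/-- ◊A := ∀X(□(A → ■X) → X) -/
def dia (A : Fm) : Fm :=
  all (imp (box (imp (A.lift 0) (bbox (var 0)))) (var 0))
/-- ◆A := ∀X(■(A → □X) → X) -/
def bdia (A : Fm) : Fm :=
  all (imp (bbox (imp (A.lift 0) (box (var 0)))) (var 0))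

end Fm

/-- Hilbert-style provability for second-order tense logic, with defined ◊/◆.
`Prov false` is intuitionistic `IKt2`; `Prov true` is classical `Kt2`
(adding double negation elimination). -/
inductive Prov : Bool → Fm → Prop where
  | axK (cl : Bool) (A B : Fm) : Prov cl (A.imp (B.imp A))
  | axS (cl : Bool) (A B C : Fm) :
      Prov cl ((A.imp (B.imp C)).imp ((A.imp B).imp (A.imp C)))
  | axAllFun (cl : Bool) (A B : Fm) :
      Prov cl ((Fm.all (A.imp B)).imp ((Fm.all A).imp (Fm.all B)))
  | axV (cl : Bool) (A : Fm) : Prov cl (A.imp (Fm.all (A.lift 0)))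
  | axC (cl : Bool) (A C : Fm) : Prov cl ((Fm.all A).imp (A.inst C))
  | mp {cl : Bool} {A B : Fm} : Prov cl (A.imp B) → Prov cl A → Prov cl B
  | gen {cl : Bool} {A : Fm} {P : ℕ} :
      Prov cl (A.inst (Fm.pr P)) → ¬ (Fm.all A).occursPr P → Prov cl (Fm.all A)
  | axBoxFun (cl : Bool) (A B : Fm) :
      Prov cl ((Fm.box (A.imp B)).imp ((Fm.box A).imp (Fm.box B)))
  | axBboxFun (cl : Bool) (A B : Fm) :
      Prov cl ((Fm.bbox (A.imp B)).imp ((Fm.bbox A).imp (Fm.bbox B)))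
  | necBox {cl : Bool} {A : Fm} : Prov cl A → Prov cl (Fm.box A)
  | necBbox {cl : Bool} {A : Fm} : Prov cl A → Prov cl (Fm.bbox A)
  | axTenseBdiaBox (cl : Bool) (A : Fm) : Prov cl ((Fm.bdia (Fm.box A)).imp A)
  | axTenseBoxBdia (cl : Bool) (A : Fm) : Prov cl (A.imp (Fm.box (Fm.bdia A)))
  | axTenseDiaBbox (cl : Bool) (A : Fm) : Prov cl ((Fm.dia (Fm.bbox A)).imp A)
  | axTenseBboxDia (cl : Bool) (A : Fm) : Prov cl (A.imp (Fm.bbox (Fm.dia A)))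
  | axDNE (A : Fm) : Prov true (A.neg.neg.imp A)

/-- Second-order intuitionistic tense logic. -/
def IKt2 (A : Fm) : Prop := Prov false A
/-- Second-order classical tense logic. -/
def Kt2 (A : Fm) : Prop := Prov true A

/-! ### Auxiliary lemmas -/

theorem Fm.subst_lift (A : Fm) : ∀ (k : ℕ) (C : Fm), (A.lift k).subst k C = A := by
  induction A <;> intro k C <;>
    simp_all [Fm.lift, Fm.subst]
  case var n =>
    rcases lt_or_ge n k with h | h
    · simp [Fm.lift, Fm.subst, h]
    · have h1 : ¬ n < k := not_lt.2 h
      have h2 : ¬ n + 1 < k := by omega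
      have h3 : ¬ n + 1 = k := by omega
      simp [Fm.lift, Fm.subst, h1, h2, h3]

namespace ProvAux

open Fm Prov

variable {cl : Bool} {A B C D X Y Z W : Fm}

theorem pid : Prov cl (A.imp A) :=
  mp (mp (axS cl A (A.imp A) A) (axK cl A (A.imp A))) (axK cl A A)

theorem thenK (h : Prov cl B) : Prov cl (A.imp B) := mp (axK cl B A) h

theorem prS' (h1 : Prov cl (A.imp (B.imp C))) (h2 : Prov cl (A.imp B)) :
    Prov cl (A.imp C) := mp (mp (axS cl A B C) h1) h2

theorem comp (h1 : Prov cl (B.imp C)) (h2 : Prov cl (A.imp B)) :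
    Prov cl (A.imp C) := prS' (thenK h1) h2

theorem pswap (h : Prov cl (A.imp (B.imp C))) : Prov cl (B.imp (A.imp C)) :=
  comp (mp (axS cl A B C) h) (axK cl B A)

theorem Bcomb : Prov cl ((B.imp C).imp ((A.imp B).imp (A.imp C))) :=
  comp (axS cl A B C) (axK cl (B.imp C) A)

theorem compR (h : Prov cl (B.imp C)) : Prov cl ((A.imp B).imp (A.imp C)) :=
  mp Bcomb h

theorem compL (h : Prov cl (A.imp B)) : Prov cl ((B.imp C).imp (A.imp C)) :=
  mp (pswap Bcomb) h

theorem comp2 (h1 : Prov cl (X.imp (Y.imp Z))) (h2 : Prov cl (Z.imp W)) :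
    Prov cl (X.imp (Y.imp W)) := comp (compR h2) h1

theorem dni : Prov cl (A.imp A.neg.neg) := pswap (pid (A := A.neg))

/-- If `C → ¬D` then `¬¬C → ¬D`. -/
theorem negStr (h : Prov cl (C.imp D.neg)) : Prov cl (C.neg.neg.imp D.neg) :=
  compL (pswap h)

theorem botElim (C : Fm) : Prov cl (Fm.bot.imp C) := by
  have h := axC cl (Fm.var 0) C
  simpa [Fm.bot, Fm.inst, Fm.subst] using h

theorem boxMono (h : Prov cl (A.imp B)) : Prov cl ((Fm.box A).imp (Fm.box B)) :=
  mp (axBoxFun cl A B) (necBox h)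

theorem bboxMono (h : Prov cl (A.imp B)) : Prov cl ((Fm.bbox A).imp (Fm.bbox B)) :=
  mp (axBboxFun cl A B) (necBbox h)

/-- Adjunction rule: from `◆B → C` infer `B → □C`. -/
theorem adjBox (h : Prov cl ((Fm.bdia B).imp C)) : Prov cl (B.imp (Fm.box C)) :=
  comp (boxMono h) (axTenseBoxBdia cl B)

/-- Adjunction rule: from `◊B → C` infer `B → ■C`. -/
theorem adjBbox (h : Prov cl ((Fm.dia B).imp C)) : Prov cl (B.imp (Fm.bbox C)) :=
  comp (bboxMono h) (axTenseBboxDia cl B)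

/-- Instantiation of the defined `◊`. -/
theorem diaInst (C X : Fm) :
    Prov cl ((Fm.dia C).imp ((Fm.box (C.imp (Fm.bbox X))).imp X)) := by
  have h := axC cl (Fm.imp (Fm.box (Fm.imp (C.lift 0) (Fm.bbox (Fm.var 0)))) (Fm.var 0)) X
  simpa [Fm.dia, Fm.inst, Fm.subst, Fm.subst_lift] using h

/-- Instantiation of the defined `◆`. -/
theorem bdiaInst (C X : Fm) :
    Prov cl ((Fm.bdia C).imp ((Fm.bbox (C.imp (Fm.box X))).imp X)) := by
  have h := axC cl (Fm.imp (Fm.bbox (Fm.imp (C.lift 0) (Fm.box (Fm.var 0)))) (Fm.var 0)) X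
  simpa [Fm.bdia, Fm.inst, Fm.subst, Fm.subst_lift] using h

/-- `□A → ¬◊¬A`. -/
theorem boxNegDia (A : Fm) : Prov cl ((Fm.box A).imp (Fm.dia A.neg).neg) := by
  have h1 : Prov cl (A.imp (A.neg.imp (Fm.bbox Fm.bot))) :=
    comp2 dni (botElim (Fm.bbox Fm.bot))
  have h2 : Prov cl ((Fm.box A).imp (Fm.box (A.neg.imp (Fm.bbox Fm.bot)))) := boxMono h1
  have h3 := diaInst (cl := cl) A.neg Fm.bot
  exact comp (pswap h3) h2

/-- `■A → ¬◆¬A`. -/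
theorem bboxNegBdia (A : Fm) : Prov cl ((Fm.bbox A).imp (Fm.bdia A.neg).neg) := by
  have h1 : Prov cl (A.imp (A.neg.imp (Fm.box Fm.bot))) :=
    comp2 dni (botElim (Fm.box Fm.bot))
  have h2 : Prov cl ((Fm.bbox A).imp (Fm.bbox (A.neg.imp (Fm.box Fm.bot)))) := bboxMono h1
  have h3 := bdiaInst (cl := cl) A.neg Fm.bot
  exact comp (pswap h3) h2

/-- Negativity for `□`. -/
theorem negativityBox (A : Fm) :
    Prov cl ((Fm.box A).neg.neg.imp (Fm.box A.neg.neg)) := by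
  have h4 : Prov cl ((Fm.box A).neg.neg.imp (Fm.dia A.neg).neg) := negStr (boxNegDia A)
  have h5 : Prov cl ((Fm.dia A.neg).imp ((Fm.box A).neg.neg.imp (Fm.box Fm.bot))) :=
    comp2 (pswap h4) (botElim (Fm.box Fm.bot))
  have h6 : Prov cl ((Fm.bbox (Fm.dia A.neg)).imp
      (Fm.bbox ((Fm.box A).neg.neg.imp (Fm.box Fm.bot)))) := bboxMono h5
  have h7 := bdiaInst (cl := cl) (Fm.box A).neg.neg Fm.bot
  have h8 : Prov cl (A.neg.imp ((Fm.bdia (Fm.box A).neg.neg).imp Fm.bot)) :=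
    comp (comp (pswap h7) h6) (axTenseBboxDia cl A.neg)
  exact adjBox (pswap h8)

/-- Negativity for `■`. -/
theorem negativityBbox (A : Fm) :
    Prov cl ((Fm.bbox A).neg.neg.imp (Fm.bbox A.neg.neg)) := by
  have h4 : Prov cl ((Fm.bbox A).neg.neg.imp (Fm.bdia A.neg).neg) := negStr (bboxNegBdia A)
  have h5 : Prov cl ((Fm.bdia A.neg).imp ((Fm.bbox A).neg.neg.imp (Fm.bbox Fm.bot))) :=
    comp2 (pswap h4) (botElim (Fm.bbox Fm.bot))
  have h6 : Prov cl ((Fm.box (Fm.bdia A.neg)).imp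
      (Fm.box ((Fm.bbox A).neg.neg.imp (Fm.bbox Fm.bot)))) := boxMono h5
  have h7 := diaInst (cl := cl) (Fm.bbox A).neg.neg Fm.bot
  have h8 : Prov cl (A.neg.imp ((Fm.dia (Fm.bbox A).neg.neg).imp Fm.bot)) :=
    comp (comp (pswap h7) h6) (axTenseBoxBdia cl A.neg)
  exact adjBbox (pswap h8)

end ProvAux

/-- Negativity lemma: IKt2 proves ¬¬□A → □¬¬A and ¬¬■A → ■¬¬A,
where ¬A := A → ∀X X. -/
theorem negativity_box_bbox (A : Fm) :
    IKt2 ((Fm.box A).neg.neg.imp (Fm.box A.neg.neg)) ∧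
    IKt2 ((Fm.bbox A).neg.neg.imp (Fm.bbox A.neg.neg)) := by
  exact ⟨ProvAux.negativityBox A, ProvAux.negativityBbox A⟩

end SOTense
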